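/- Suppose that for every z : β the computation unfoldM z commutes with get and put, i.e., for all g, unfoldM z >>= (fun xs => get >>= g xs) = get >>= fun s => unfoldM z >>= fun xs => g xs s, and for all st' : σ and g, unfoldM z >>= (fun xs => put st' >>= fun _ => g xs) = put st' >>= fun _ => (unfoldM z >>= g). Then for every op : σ → α → σ, ok : σ → Bool, st : σ, and z : β, unfoldM z >>= filt (fun zs => (scanlp op st zs).all ok) = protect (put st >>= fun _ => hyloM z), where hyloM is the monadic hylomorphism built from otimes := odot and e := pure []. -/
import Mathlib


/-- `guard` built from a failure operation `mzero`. -/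
def mguard {m : Type → Type} [Monad m] (mzero : {α : Type} → m α) (b : Bool) : m PUnit :=
  if b then pure PUnit.unit else mzero

/-- Monadic filtering by a Boolean predicate. -/
def filt {m : Type → Type} [Monad m] (mzero : {α : Type} → m α) {α : Type}
    (p : α → Bool) (x : α) : m α :=
  mguard (m := m) @mzero (p x) >>= fun _ => pure x

/-- The prefix scan: `foldl` applied to every non-empty prefix. -/
def scanlp {σ α : Type} (op : σ → α → σ) : σ → List α → List σ
  | _, [] => []
  | st, x :: xs => op st x :: scanlp op (op st x) xs

/-- Backup the state, run a computation, restore the state. -/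
def protect {m : Type → Type} [Monad m] {σ β : Type}
    (get : m σ) (put : σ → m PUnit) (n : m β) : m β :=
  get >>= fun ini => n >>= fun x => put ini >>= fun _ => pure x

/-- The step function of the fused, guarded stateful `foldr`. -/
def odotF {m : Type → Type} [Monad m] (mzero : {α : Type} → m α) {σ α : Type}
    (get : m σ) (put : σ → m PUnit) (op : σ → α → σ) (ok : σ → Bool)
    (x : α) (n : m (List α)) : m (List α) :=
  get >>= fun st => mguard (m := m) @mzero (ok (op st x)) >>= fun _ =>
    put (op st x) >>= fun _ => (n >>= fun ys => pure (x :: ys))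

/-- Monadic unfold on a well-founded relation `r`: the step `f` produces
only `r`-smaller seeds. -/
def unfoldM {m : Type → Type} [Monad m] {α β : Type}
    (r : β → β → Prop) (hwf : WellFounded r)
    (p : β → Bool) (f : (y : β) → p y = false → m {xz : α × β // r xz.2 y})
    (y : β) : m (List α) :=
  hwf.fix
    (fun y ih =>
      if h : p y = true then pure []
      else
        f y (Bool.eq_false_iff.mpr h) >>= fun xz =>
          ih xz.1.2 xz.2 >>= fun xs => pure (xz.1.1 :: xs))
    y

/-- Monadic hylomorphism on a well-founded relation `r`. -/
def hyloM {m : Type → Type} [Monad m] {α β γ : Type}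
    (r : β → β → Prop) (hwf : WellFounded r)
    (p : β → Bool) (f : (y : β) → p y = false → m {xz : α × β // r xz.2 y})
    (otimes : α → m γ → m γ) (e : m γ)
    (y : β) : m γ :=
  hwf.fix
    (fun y ih =>
      if h : p y = true then e
      else
        f y (Bool.eq_false_iff.mpr h) >>= fun xz =>
          otimes xz.1.1 (ih xz.1.2 xz.2))
    y


section Helpers

variable {m : Type → Type} [Monad m] [LawfulMonad m]

theorem mybind_congr {α β : Type} {x : m α} {F G : α → m β} (h : ∀ a, F a = G a) :
    x >>= F = x >>= G := by
  have : F = G := funext h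
  rw [this]

theorem mguard_bind_comm (mzero : {α : Type} → m α)
    (left_zero : ∀ {α β : Type} (f : α → m β), (mzero : m α) >>= f = mzero)
    (right_zero : ∀ {α β : Type} (n : m α), (n >>= fun _ => (mzero : m β)) = mzero)
    {α γ : Type} (b : Bool) (n : m α) (k : PUnit → α → m γ) :
    (mguard (m := m) @mzero b >>= fun u => n >>= k u)
      = n >>= fun a => mguard (m := m) @mzero b >>= fun u => k u a := by
  cases b with
  | true => simp [mguard]
  | false =>
    simp only [mguard, Bool.false_eq_true, if_false]
    rw [left_zero]
    simp only [left_zero]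
    rw [right_zero]

theorem mguard_and (mzero : {α : Type} → m α)
    (left_zero : ∀ {α β : Type} (f : α → m β), (mzero : m α) >>= f = mzero)
    {γ : Type} (a b : Bool) (k : PUnit → m γ) :
    (mguard (m := m) @mzero (a && b) >>= k)
      = mguard (m := m) @mzero a >>= fun _ => mguard (m := m) @mzero b >>= k := by
  cases a with
  | true => simp [mguard]
  | false => simp [mguard, left_zero]

theorem unfoldM_eq {α β : Type}
    (r : β → β → Prop) (hwf : WellFounded r)
    (p : β → Bool) (f : (y : β) → p y = false → m {xz : α × β // r xz.2 y})
    (y : β) :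
    unfoldM r hwf p f y =
      if h : p y = true then pure []
      else
        f y (Bool.eq_false_iff.mpr h) >>= fun xz =>
          unfoldM r hwf p f xz.1.2 >>= fun xs => pure (xz.1.1 :: xs) := by
  unfold unfoldM
  rw [WellFounded.fix_eq]

theorem hyloM_eq {α β γ : Type}
    (r : β → β → Prop) (hwf : WellFounded r)
    (p : β → Bool) (f : (y : β) → p y = false → m {xz : α × β // r xz.2 y})
    (otimes : α → m γ → m γ) (e : m γ) (y : β) :
    hyloM r hwf p f otimes e y =
      if h : p y = true then e
      else
        f y (Bool.eq_false_iff.mpr h) >>= fun xz =>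
          otimes xz.1.1 (hyloM r hwf p f otimes e xz.1.2) := by
  unfold hyloM
  rw [WellFounded.fix_eq]

theorem odotF_def (mzero : {α : Type} → m α) {σ α : Type}
    (get : m σ) (put : σ → m PUnit) (op : σ → α → σ) (ok : σ → Bool)
    (x : α) (n : m (List α)) :
    odotF (m := m) @mzero get put op ok x n
      = get >>= fun st => mguard (m := m) @mzero (ok (op st x)) >>= fun _ =>
          put (op st x) >>= fun _ => (n >>= fun ys => pure (x :: ys)) := rfl

end Helpers

theorem unfold_filt_scanl_local {m : Type → Type} [Monad m] [LawfulMonad m]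
    (mzero : {α : Type} → m α) (mplus : {α : Type} → m α → m α → m α)
    (mplus_assoc : ∀ {α : Type} (a b c : m α), mplus (mplus a b) c = mplus a (mplus b c))
    (mzero_left : ∀ {α : Type} (a : m α), mplus mzero a = a)
    (mzero_right : ∀ {α : Type} (a : m α), mplus a mzero = a)
    (left_distr : ∀ {α β : Type} (a b : m α) (f : α → m β),
      mplus a b >>= f = mplus (a >>= f) (b >>= f))
    (left_zero : ∀ {α β : Type} (f : α → m β), (mzero : m α) >>= f = mzero)
    (right_distr : ∀ {α β : Type} (n : m α) (f₁ f₂ : α → m β),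
      (n >>= fun x => mplus (f₁ x) (f₂ x)) = mplus (n >>= f₁) (n >>= f₂))
    (right_zero : ∀ {α β : Type} (n : m α), (n >>= fun _ => (mzero : m β)) = mzero)
    {σ : Type} (get : m σ) (put : σ → m PUnit)
    (put_put : ∀ st st' : σ, (put st >>= fun _ => put st') = put st')
    (put_get : ∀ st : σ, (put st >>= fun _ => get) = put st >>= fun _ => pure st)
    (get_put : get >>= put = pure PUnit.unit)
    (get_get : ∀ {β : Type} (k : σ → σ → m β),
      (get >>= fun st => get >>= k st) = get >>= fun st => k st st)
    {α β : Type}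
    (r : β → β → Prop) (hwf : WellFounded r)
    (p : β → Bool) (f : (y : β) → p y = false → m {xz : α × β // r xz.2 y})
    (hget : ∀ {γ : Type} (z : β) (g : List α → σ → m γ),
      (unfoldM r hwf p f z >>= fun xs => get >>= g xs)
        = get >>= fun s => unfoldM r hwf p f z >>= fun xs => g xs s)
    (hput : ∀ {γ : Type} (z : β) (st' : σ) (g : List α → m γ),
      (unfoldM r hwf p f z >>= fun xs => put st' >>= fun _ => g xs)
        = put st' >>= fun _ => (unfoldM r hwf p f z >>= g)) :
    ∀ (op : σ → α → σ) (ok : σ → Bool) (st : σ) (z : β),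
      (unfoldM r hwf p f z >>= filt (m := m) @mzero (fun zs => (scanlp op st zs).all ok))
        = protect get put
            (put st >>= fun _ =>
              hyloM r hwf p f (odotF @mzero get put op ok) (pure []) z) := by

  intro op ok st z
  -- derived state laws in right-nested form
  have put_get' : ∀ {γ : Type} (s : σ) (k : σ → m γ),
      (put s >>= fun _ => get >>= k) = put s >>= fun _ => k s := by
    intro γ s k
    rw [← bind_assoc, put_get, bind_assoc]
    simp
  have put_put' : ∀ {γ : Type} (s s' : σ) (k : PUnit → m γ),
      (put s >>= fun _ => put s' >>= k) = put s' >>= k := by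
    intro γ s s' k
    rw [← bind_assoc, put_put]
  have get_put' : ∀ {γ : Type} (k : m γ),
      (get >>= fun s => put s >>= fun _ => k) = k := by
    intro γ k
    have : (get >>= fun s => put s >>= fun _ => k) = (get >>= put) >>= fun _ => k := by
      rw [bind_assoc]
    rw [this, get_put]
    simp
  -- D: odotF commutes out of unfoldM
  have lemD : ∀ (x : α) (z' : β) (hh : List α → m (List α)),
      (unfoldM r hwf p f z' >>= fun xs => odotF @mzero get put op ok x (hh xs))
        = odotF @mzero get put op ok x (unfoldM r hwf p f z' >>= hh) := by
    intro x z' hh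
    unfold odotF
    rw [hget z' (fun xs s => mguard (m := m) @mzero (ok (op s x)) >>= fun _ =>
      put (op s x) >>= fun _ => (hh xs >>= fun ys => pure (x :: ys)))]
    refine mybind_congr fun s => ?_
    rw [← mguard_bind_comm @mzero @left_zero @right_zero (ok (op s x))
      (unfoldM r hwf p f z')
      (fun _ xs => put (op s x) >>= fun _ => (hh xs >>= fun ys => pure (x :: ys)))]
    refine mybind_congr fun _ => ?_
    rw [hput z' (op s x) (fun xs => hh xs >>= fun ys => pure (x :: ys))]
    refine mybind_congr fun _ => ?_
    rw [bind_assoc]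
  -- B: hyloM = unfoldM then foldr
  have lemB : ∀ z : β,
      hyloM r hwf p f (odotF @mzero get put op ok) (pure []) z
        = unfoldM r hwf p f z >>= fun xs =>
            xs.foldr (odotF @mzero get put op ok) (pure []) := by
    intro z
    refine hwf.induction
      (C := fun z => hyloM r hwf p f (odotF @mzero get put op ok) (pure []) z
        = unfoldM r hwf p f z >>= fun xs =>
            xs.foldr (odotF @mzero get put op ok) (pure [])) z ?_
    intro z ih
    rw [hyloM_eq, unfoldM_eq]
    by_cases h : p z = true
    · simp [h]
    · simp only [h, dif_neg, Bool.false_eq_true, not_false_iff, bind_assoc, pure_bind,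
        List.foldr_cons]
      refine mybind_congr fun xz => ?_
      rw [ih xz.1.2 xz.2]
      exact (lemD xz.1.1 xz.1.2
        (fun ys => ys.foldr (odotF @mzero get put op ok) (pure []))).symm
  -- C: put then foldr = guard, put final state, return
  have lemC : ∀ (xs : List α) (st : σ),
      (put st >>= fun _ => xs.foldr (odotF @mzero get put op ok) (pure []))
        = mguard (m := m) @mzero ((scanlp op st xs).all ok) >>= fun _ =>
            put (xs.foldl op st) >>= fun _ => pure xs := by
    intro xs
    induction xs with
    | nil => intro s; simp [scanlp, mguard]
    | cons x xs ih =>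
      intro s
      simp only [List.foldr_cons, List.foldl_cons]
      rw [odotF_def]
      rw [put_get' s]
      rw [← mguard_bind_comm @mzero @left_zero @right_zero (ok (op s x)) (put s)
        (fun _ _ => put (op s x) >>= fun _ =>
          (xs.foldr (odotF @mzero get put op ok) (pure []) >>= fun ys => pure (x :: ys)))]
      rw [show (scanlp op s (x :: xs)).all ok
          = (ok (op s x) && (scanlp op (op s x) xs).all ok) from by simp [scanlp]]
      rw [mguard_and @mzero @left_zero]
      refine mybind_congr fun _ => ?_
      rw [put_put']
      rw [show (put (op s x) >>= fun _ =>
            (xs.foldr (odotF @mzero get put op ok) (pure []) >>= fun ys => pure (x :: ys)))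
          = (put (op s x) >>= fun _ =>
              xs.foldr (odotF @mzero get put op ok) (pure [])) >>= fun ys => pure (x :: ys)
        from by rw [bind_assoc]]
      rw [ih (op s x)]
      simp [bind_assoc]
  -- main computation
  symm
  rw [lemB z]
  unfold protect
  simp only [bind_assoc]
  rw [show (get >>= fun ini => put st >>= fun _ => unfoldM r hwf p f z >>= fun xs =>
        (xs.foldr (odotF @mzero get put op ok) (pure [])) >>= fun x =>
          put ini >>= fun _ => pure x)
      = get >>= fun ini => put ini >>= fun _ =>
          (unfoldM r hwf p f z >>=
            filt (m := m) @mzero (fun zs => (scanlp op st zs).all ok)) from ?_]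
  · rw [get_put']
  refine mybind_congr fun ini => ?_
  rw [← hput z st (fun xs => (xs.foldr (odotF @mzero get put op ok) (pure [])) >>= fun x =>
        put ini >>= fun _ => pure x)]
  rw [show (fun xs : List α => put st >>= fun _ =>
        (xs.foldr (odotF @mzero get put op ok) (pure [])) >>= fun x =>
          put ini >>= fun _ => pure x)
      = fun xs : List α => put ini >>= fun _ =>
          filt (m := m) @mzero (fun zs => (scanlp op st zs).all ok) xs from ?_]
  · rw [hput z ini (filt (m := m) @mzero (fun zs => (scanlp op st zs).all ok))]
  funext xs
  rw [show (put st >>= fun _ =>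
        (xs.foldr (odotF @mzero get put op ok) (pure [])) >>= fun x =>
          put ini >>= fun _ => pure x)
      = (put st >>= fun _ => xs.foldr (odotF @mzero get put op ok) (pure [])) >>= fun x =>
          put ini >>= fun _ => pure x from by rw [bind_assoc]]
  rw [lemC xs st]
  simp only [bind_assoc, pure_bind]
  rw [put_put']
  rw [mguard_bind_comm @mzero @left_zero @right_zero _ (put ini)
    (fun _ _ => pure xs)]
  unfold filt
  rfl
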